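/- Under the same hypotheses (A + A^♭ + C^♭C = 0, S^♭S = SS^♭ = I, and Ξ_G(s) = S - C(sI-A)^{-1}C^♭S defined wherever sI - A is invertible), the inverse of Ξ_G(s) is given by Ξ_G(s)^{-1} = Ξ_G(-s̄)^♭ = J_m Ξ_G(-s̄)^† J_m, for every s ∈ ℂ such that both sI - A and -s̄I - A are invertible. -/

import Mathlib

/-!
The flat operation `X ↦ J Xᴴ J` is an anti-involution compatible with inverses. Put
`M = sI - A` and `E = (-s̄I - A)^♭`. Physical realizability says precisely that
`M + E = C^♭ C`, and the flat of `Ξ(-s̄)` is `S^♭ (I - C E⁻¹ C^♭)`, while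
`Ξ(s) = (I - C M⁻¹ C^♭) S`. After cancelling `S S^♭ = I`, the claim is the
Woodbury-type identity `(I - U M⁻¹ V)(I - U E⁻¹ V) = I` for `M + E = V U`, which
follows from `M⁻¹ (V U) E⁻¹ = M⁻¹ + E⁻¹`.
-/

open Matrix

/-- J_n = diag(I_n, -I_n). -/
noncomputable def Jmat (n : ℕ) : Matrix (Fin n ⊕ Fin n) (Fin n ⊕ Fin n) ℂ :=
  Matrix.fromBlocks 1 0 0 (-1)

/-- The ♭ operation X^♭ = J_k X^† J_j for X ∈ ℂ^{2j×2k}. -/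
noncomputable def flat {j k : ℕ} (X : Matrix (Fin j ⊕ Fin j) (Fin k ⊕ Fin k) ℂ) :
    Matrix (Fin k ⊕ Fin k) (Fin j ⊕ Fin j) ℂ :=
  Jmat k * Xᴴ * Jmat j

namespace Matrix

variable {p q R : Type*} [Fintype p] [Fintype q] [DecidableEq p] [DecidableEq q] [CommRing R]

theorem one_sub_mul_inv_mul_mul_one_sub_mul_inv_mul_eq_one (U : Matrix p q R)
    (V : Matrix q p R) {M E : Matrix q q R} (hM : IsUnit M.det) (hE : IsUnit E.det)
    (hME : M + E = V * U) :
    (1 - U * M⁻¹ * V) * (1 - U * E⁻¹ * V) = 1 := by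
  have key : M⁻¹ * (V * U) * E⁻¹ = E⁻¹ + M⁻¹ := by
    rw [← hME, Matrix.mul_add, Matrix.add_mul, nonsing_inv_mul _ hM, Matrix.one_mul,
      Matrix.mul_assoc, mul_nonsing_inv _ hE, Matrix.mul_one]
  calc (1 - U * M⁻¹ * V) * (1 - U * E⁻¹ * V)
      = 1 - U * E⁻¹ * V - U * M⁻¹ * V + U * (M⁻¹ * (V * U) * E⁻¹) * V := by
        simp only [Matrix.sub_mul, Matrix.mul_sub, Matrix.one_mul, Matrix.mul_one,
          Matrix.mul_assoc]
        abel
    _ = 1 := by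
        rw [key, Matrix.mul_add, Matrix.add_mul]
        abel

end Matrix

theorem Jmat_mul_self (k : ℕ) : Jmat k * Jmat k = 1 := by
  simp [Jmat, fromBlocks_multiply, ← fromBlocks_one]

theorem Jmat_conjTranspose (k : ℕ) : (Jmat k)ᴴ = Jmat k := by
  simp [Jmat, fromBlocks_conjTranspose]

theorem Jmat_inv (k : ℕ) : (Jmat k)⁻¹ = Jmat k :=
  inv_eq_left_inv (Jmat_mul_self k)

section Flat

variable {i j k : ℕ}

theorem flat_one : flat (1 : Matrix (Fin k ⊕ Fin k) (Fin k ⊕ Fin k) ℂ) = 1 := by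
  simp [flat, Jmat_mul_self]

theorem flat_mul (X : Matrix (Fin i ⊕ Fin i) (Fin j ⊕ Fin j) ℂ)
    (Y : Matrix (Fin j ⊕ Fin j) (Fin k ⊕ Fin k) ℂ) :
    flat (X * Y) = flat Y * flat X := by
  simp only [flat, conjTranspose_mul, Matrix.mul_assoc]
  rw [← Matrix.mul_assoc (Jmat j) (Jmat j), Jmat_mul_self, Matrix.one_mul]

theorem flat_flat (X : Matrix (Fin j ⊕ Fin j) (Fin k ⊕ Fin k) ℂ) : flat (flat X) = X := by
  simp only [flat, conjTranspose_mul, Jmat_conjTranspose, conjTranspose_conjTranspose,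
    Matrix.mul_assoc, Jmat_mul_self, Matrix.mul_one]
  rw [← Matrix.mul_assoc, Jmat_mul_self, Matrix.one_mul]

theorem flat_sub (X Y : Matrix (Fin j ⊕ Fin j) (Fin k ⊕ Fin k) ℂ) :
    flat (X - Y) = flat X - flat Y := by
  simp [flat, conjTranspose_sub, Matrix.mul_sub, Matrix.sub_mul]

theorem flat_smul_one (w : ℂ) :
    flat (w • (1 : Matrix (Fin k ⊕ Fin k) (Fin k ⊕ Fin k) ℂ)) = starRingEnd ℂ w • 1 := by
  simp [flat, conjTranspose_smul, Jmat_mul_self]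

theorem flat_inv (X : Matrix (Fin k ⊕ Fin k) (Fin k ⊕ Fin k) ℂ) : flat X⁻¹ = (flat X)⁻¹ := by
  simp only [flat, Matrix.mul_inv_rev, Jmat_inv, conjTranspose_nonsing_inv, Matrix.mul_assoc]

theorem isUnit_det_flat {X : Matrix (Fin k ⊕ Fin k) (Fin k ⊕ Fin k) ℂ} (hX : IsUnit X.det) :
    IsUnit (flat X).det :=
  isUnit_det_of_right_inverse (B := flat X⁻¹) <| by
    rw [← flat_mul, nonsing_inv_mul _ hX, flat_one]

theorem flat_sub_mul_inv_mul_mul {n m : ℕ} (S : Matrix (Fin m ⊕ Fin m) (Fin m ⊕ Fin m) ℂ)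
    (C : Matrix (Fin m ⊕ Fin m) (Fin n ⊕ Fin n) ℂ) (N : Matrix (Fin n ⊕ Fin n) (Fin n ⊕ Fin n) ℂ) :
    flat (S - C * N⁻¹ * (flat C * S)) = flat S * (1 - C * (flat N)⁻¹ * flat C) := by
  rw [flat_sub, flat_mul, flat_mul, flat_mul, flat_flat, flat_inv]
  simp only [Matrix.mul_sub, Matrix.mul_one, Matrix.mul_assoc]

end Flat

theorem sub_add_flat_neg_conj_smul_one_sub {n m : ℕ}
    {A : Matrix (Fin n ⊕ Fin n) (Fin n ⊕ Fin n) ℂ} {C : Matrix (Fin m ⊕ Fin m) (Fin n ⊕ Fin n) ℂ}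
    (hPR : A + flat A + flat C * C = 0) (s : ℂ) :
    (s • 1 - A) + flat ((-(starRingEnd ℂ s)) • 1 - A) = flat C * C := by
  have hflatA : flat A = -A - flat C * C := by
    rw [← sub_eq_zero, ← hPR]
    abel
  rw [flat_sub, flat_smul_one, map_neg, Complex.conj_conj, hflatA]
  module

/-- For a physically realizable quantum linear system, the inverse of the transfer function
is Ξ_G(s)⁻¹ = Ξ_G(-s̄)^♭, valid whenever sI - A and -s̄I - A are invertible. -/
theorem transfer_function_inverse {n m : ℕ}
    (A : Matrix (Fin n ⊕ Fin n) (Fin n ⊕ Fin n) ℂ)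
    (C : Matrix (Fin m ⊕ Fin m) (Fin n ⊕ Fin n) ℂ)
    (S : Matrix (Fin m ⊕ Fin m) (Fin m ⊕ Fin m) ℂ)
    (hPR : A + flat A + flat C * C = 0)
    (hS : flat S * S = 1 ∧ S * flat S = 1)
    (Ξ : ℂ → Matrix (Fin m ⊕ Fin m) (Fin m ⊕ Fin m) ℂ)
    (hΞ : ∀ s : ℂ, Ξ s = S - C * (s • (1 : Matrix (Fin n ⊕ Fin n) (Fin n ⊕ Fin n) ℂ) - A)⁻¹ * (flat C * S)) :
    ∀ s : ℂ,
      IsUnit (s • (1 : Matrix (Fin n ⊕ Fin n) (Fin n ⊕ Fin n) ℂ) - A).det →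
      IsUnit ((-(starRingEnd ℂ s)) • (1 : Matrix (Fin n ⊕ Fin n) (Fin n ⊕ Fin n) ℂ) - A).det →
      Ξ s * flat (Ξ (-(starRingEnd ℂ s))) = 1 ∧ flat (Ξ (-(starRingEnd ℂ s))) * Ξ s = 1 := by
  intro s hM hN
  set M : Matrix (Fin n ⊕ Fin n) (Fin n ⊕ Fin n) ℂ := s • 1 - A
  set E := flat ((-(starRingEnd ℂ s)) • (1 : Matrix (Fin n ⊕ Fin n) (Fin n ⊕ Fin n) ℂ) - A)
  have hΞs : Ξ s = (1 - C * M⁻¹ * flat C) * S := by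
    rw [hΞ, Matrix.sub_mul, Matrix.one_mul, Matrix.mul_assoc _ (flat C)]
  have hΞflat : flat (Ξ (-(starRingEnd ℂ s))) = flat S * (1 - C * E⁻¹ * flat C) := by
    rw [hΞ, flat_sub_mul_inv_mul_mul]
  have hinv : Ξ s * flat (Ξ (-(starRingEnd ℂ s))) = 1 := by
    rw [hΞs, hΞflat, Matrix.mul_assoc, ← Matrix.mul_assoc S, hS.2, Matrix.one_mul]
    exact one_sub_mul_inv_mul_mul_one_sub_mul_inv_mul_eq_one C (flat C) hM (isUnit_det_flat hN)
      (sub_add_flat_neg_conj_smul_one_sub hPR s)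
  exact ⟨hinv, mul_eq_one_comm.mp hinv⟩
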